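/- Let m ≥ 0 and for h > 0 set ξₕ = (π/(2h), -π/(2h), 0) ∈ ℝ³. Then for the 3D forward-backward symbols one has ‖(G̃₀ₕᶠᵇ(ξₕ) - i·I₄)⁻¹‖ = h/(h²+(mh+4)²)^{1/2} and ‖(G₀ₕᶠᵇ(ξₕ) - i·I₄)⁻¹‖ = 1/(1+m²)^{1/2}; consequently for all h ∈ (0,1], ‖(G₀ₕᶠᵇ(ξₕ) - iI₄)⁻¹ - (G̃₀ₕᶠᵇ(ξₕ) - iI₄)⁻¹‖ ≥ (1+m²)^{-1/2} - (1+(m+4)²)^{-1/2} > 0. -/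

import Mathlib

noncomputable def matOpNorm {n : Type*} [Fintype n] [DecidableEq n]
    (A : Matrix n n ℂ) : ℝ :=
  ‖Matrix.toEuclideanCLM (𝕜 := ℂ) A‖

noncomputable def pauli1 : Matrix (Fin 2) (Fin 2) ℂ := !![0, 1; 1, 0]
noncomputable def pauli2 : Matrix (Fin 2) (Fin 2) ℂ := !![0, -Complex.I; Complex.I, 0]
noncomputable def pauli3 : Matrix (Fin 2) (Fin 2) ℂ := !![1, 0; 0, -1]

noncomputable def dotSigma (U : Fin 3 → ℂ) : Matrix (Fin 2) (Fin 2) ℂ :=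
  U 0 • pauli1 + U 1 • pauli2 + U 2 • pauli3

noncomputable def Sminus (h : ℝ) (ξ : Fin 3 → ℝ) : Fin 3 → ℂ :=
  fun j => -(1 / (Complex.I * h)) * (Complex.exp (-(Complex.I) * h * ξ j) - 1)

noncomputable def Splus (h : ℝ) (ξ : Fin 3 → ℝ) : Fin 3 → ℂ :=
  fun j => (starRingEnd ℂ) (Sminus h ξ j)

noncomputable def vnorm (v : Fin 3 → ℂ) : ℝ :=
  Real.sqrt (∑ j, ‖v j‖ ^ 2)

noncomputable def fh3 (h : ℝ) (ξ : Fin 3 → ℝ) : ℝ :=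
  ∑ j, 4 / h * Real.sin (h * ξ j / 2) ^ 2

noncomputable def G3fb (h m : ℝ) (ξ : Fin 3 → ℝ) :
    Matrix (Fin 2 ⊕ Fin 2) (Fin 2 ⊕ Fin 2) ℂ :=
  Matrix.fromBlocks ((m : ℂ) • 1) (dotSigma (Sminus h ξ))
    (dotSigma (Splus h ξ)) ((-m : ℂ) • 1)

noncomputable def G3fbmod (h m : ℝ) (ξ : Fin 3 → ℝ) :
    Matrix (Fin 2 ⊕ Fin 2) (Fin 2 ⊕ Fin 2) ℂ :=
  G3fb h m ξ + ((fh3 h ξ : ℝ) : ℂ) • Matrix.fromBlocks 1 0 0 (-1)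

noncomputable def xih (h : ℝ) : Fin 3 → ℝ :=
  ![Real.pi / (2 * h), -(Real.pi / (2 * h)), 0]

section Aux
set_option maxHeartbeats 2000000

open Matrix Complex

lemma matOpNorm_diagonal_eq' {n : Type*} [Fintype n] [DecidableEq n]
    (v : n → ℂ) (C : ℝ) (h1 : ∀ i, ‖v i‖ ≤ C) (i0 : n) (h2 : ‖v i0‖ = C) :
    matOpNorm (Matrix.diagonal v) = C := by
  have hC : 0 ≤ C := h2 ▸ norm_nonneg _
  set T := Matrix.toEuclideanCLM (𝕜 := ℂ) (Matrix.diagonal v) with hT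
  have happ : ∀ (x : EuclideanSpace ℂ n) (i : n), T x i = v i * x i := by
    intro x i
    show Matrix.toLin' (Matrix.diagonal v) x i = _
    simp [Matrix.mulVec_diagonal]
  apply le_antisymm
  · apply ContinuousLinearMap.opNorm_le_bound _ hC
    intro x
    rw [EuclideanSpace.norm_eq, EuclideanSpace.norm_eq]
    have : C * Real.sqrt (∑ i, ‖x i‖^2) = Real.sqrt (∑ i, C^2 * ‖x i‖^2) := by
      rw [← Finset.mul_sum, Real.sqrt_mul (by positivity), Real.sqrt_sq hC]
    rw [this]
    apply Real.sqrt_le_sqrt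
    apply Finset.sum_le_sum
    intro i _
    rw [show ‖T x i‖ = ‖v i * x i‖ from by rw [happ], norm_mul, mul_pow]
    gcongr
    exact h1 i
  · have hle := T.le_opNorm (EuclideanSpace.single i0 1)
    have h3 : T (EuclideanSpace.single i0 1) = EuclideanSpace.single i0 (v i0) := by
      ext i
      rw [happ]
      by_cases h : i = i0 <;> simp [h, EuclideanSpace.single_apply]
    rw [h3, EuclideanSpace.norm_single, EuclideanSpace.norm_single, norm_one, mul_one] at hle
    rw [← h2]
    exact hle

open scoped Matrix.Norms.L2Operator in
lemma matOpNorm_sq' {n : Type*} [Fintype n] [DecidableEq n] (A : Matrix n n ℂ) :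
    matOpNorm (Aᴴ * A) = matOpNorm A * matOpNorm A := by
  rw [show matOpNorm (Aᴴ * A) = ‖Aᴴ * A‖ from rfl, show matOpNorm A = ‖A‖ from rfl]
  exact Matrix.l2_opNorm_conjTranspose_mul_self A

lemma matOpNorm_sub_ge {n : Type*} [Fintype n] [DecidableEq n] (A B : Matrix n n ℂ) :
    matOpNorm A - matOpNorm B ≤ matOpNorm (A - B) := by
  unfold matOpNorm
  rw [map_sub]
  exact norm_sub_norm_le _ _

noncomputable def Mmat (a h : ℝ) : Matrix (Fin 2 ⊕ Fin 2) (Fin 2 ⊕ Fin 2) ℂ :=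
  Matrix.fromBlocks ((a:ℂ) • 1) !![0, 0; (2 - 2*I)/h, 0]
    !![0, (2 + 2*I)/h; 0, 0] ((-a:ℂ) • 1)

noncomputable def Nmat (a h : ℝ) : Matrix (Fin 2 ⊕ Fin 2) (Fin 2 ⊕ Fin 2) ℂ :=
  Matrix.fromBlocks
    !![((a:ℂ)+I)*((h:ℂ)^2+(a:ℂ)^2*(h:ℂ)^2+8)*h, 0;
       0, ((a:ℂ)+I)*(1+(a:ℂ)^2)*(h:ℂ)^3]
    !![0, 0; ((2:ℂ) - 2*I)*(1+(a:ℂ)^2)*(h:ℂ)^2, 0]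
    !![0, ((2:ℂ) + 2*I)*(1+(a:ℂ)^2)*(h:ℂ)^2; 0, 0]
    !![(I-(a:ℂ))*(1+(a:ℂ)^2)*(h:ℂ)^3, 0;
       0, (I-(a:ℂ))*((h:ℂ)^2+(a:ℂ)^2*(h:ℂ)^2+8)*h]

noncomputable def scal (a h : ℝ) : ℂ := (((1+a^2)*(h^2+a^2*h^2+8)*h : ℝ) : ℂ)

noncomputable def wvec (a h : ℝ) : (Fin 2 ⊕ Fin 2) → ℂ :=
  Sum.elim ![((1/(1+a^2):ℝ):ℂ), ((h^2/(h^2+a^2*h^2+8):ℝ):ℂ)]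
    ![((h^2/(h^2+a^2*h^2+8):ℝ):ℂ), ((1/(1+a^2):ℝ):ℂ)]

lemma scal_ne (a h : ℝ) (hh : 0 < h) : scal a h ≠ 0 := by
  rw [scal]
  exact_mod_cast Complex.ofReal_ne_zero.mpr (by positivity)

lemma MN_eq (a h : ℝ) (hh : 0 < h) :
    (Mmat a h - Complex.I • 1) * Nmat a h = scal a h • 1 := by
  have hh0 : (h:ℂ) ≠ 0 := by exact_mod_cast hh.ne'
  have hsub : Mmat a h - Complex.I • 1 =
      Matrix.fromBlocks ((a:ℂ) • 1 - Complex.I • 1) !![0, 0; (2 - 2*I)/h, 0]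
        !![0, (2 + 2*I)/h; 0, 0] ((-a:ℂ) • 1 - Complex.I • 1) := by
    rw [Mmat, ← Matrix.fromBlocks_one, Matrix.fromBlocks_smul, sub_eq_add_neg,
      Matrix.fromBlocks_neg, Matrix.fromBlocks_add]
    simp [sub_eq_add_neg]
  rw [hsub, Nmat, Matrix.fromBlocks_multiply, ← Matrix.fromBlocks_one, Matrix.fromBlocks_smul]
  congr 1 <;>
  · ext i j
    fin_cases i <;> fin_cases j <;>
      · simp [Matrix.one_fin_two, Matrix.mul_apply, Fin.sum_univ_two, Matrix.smul_apply,
          Matrix.sub_apply, Matrix.one_apply, scal]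
        try push_cast
        try field_simp
        try ring_nf
        try simp [Complex.I_sq]
        try ring_nf

lemma key_inv (a h : ℝ) (hh : 0 < h) :
    (Mmat a h - Complex.I • 1)⁻¹ = (scal a h)⁻¹ • Nmat a h := by
  apply Matrix.inv_eq_right_inv
  rw [Matrix.mul_smul, MN_eq a h hh, smul_smul, inv_mul_cancel₀ (scal_ne a h hh), one_smul]

lemma NN_eq (a h : ℝ) (hh : 0 < h) :
    (Nmat a h)ᴴ * Nmat a h = (scal a h * scal a h) • Matrix.diagonal (wvec a h) := by
  have hh0 : (h:ℂ) ≠ 0 := by exact_mod_cast hh.ne'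
  have h1 : ((1:ℂ) + (a:ℂ)^2) ≠ 0 := by
    have : ((1+a^2:ℝ):ℂ) ≠ 0 := Complex.ofReal_ne_zero.mpr (by positivity)
    push_cast at this; exact this
  have hD : (h:ℂ)^2 + (a:ℂ)^2*(h:ℂ)^2 + 8 ≠ 0 := by
    have : ((h^2+a^2*h^2+8:ℝ):ℂ) ≠ 0 := Complex.ofReal_ne_zero.mpr (by positivity)
    push_cast at this; exact this
  ext i j
  rcases i with i | i <;> rcases j with j | j <;> fin_cases i <;> fin_cases j <;>
    · simp [Nmat, wvec, scal, Matrix.mul_apply, Fintype.sum_sum_type, Fin.sum_univ_two,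
        Matrix.diagonal_apply, Matrix.conjTranspose_apply, _root_.map_mul, _root_.map_add, map_ofNat,
        _root_.map_pow, Complex.conj_I, Complex.conj_ofReal]
      try push_cast
      try field_simp
      try ring_nf
      try simp [Complex.I_sq]
      try ring_nf

lemma key_norm (a h : ℝ) (ha : 0 ≤ a) (hh : 0 < h) :
    matOpNorm ((Mmat a h - Complex.I • (1 : Matrix (Fin 2 ⊕ Fin 2) (Fin 2 ⊕ Fin 2) ℂ))⁻¹)
      = 1 / Real.sqrt (1 + a^2) := by
  have hpos : (0:ℝ) < 1 + a^2 := by positivity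
  have hDpos : (0:ℝ) < h^2 + a^2*h^2 + 8 := by positivity
  set B := (scal a h)⁻¹ • Nmat a h with hB
  have hBB : Bᴴ * B = Matrix.diagonal (wvec a h) := by
    rw [hB, Matrix.conjTranspose_smul, Matrix.smul_mul, Matrix.mul_smul, NN_eq a h hh,
      smul_smul, smul_smul]
    have hs := scal_ne a h hh
    have hstar : star (scal a h)⁻¹ = (scal a h)⁻¹ := by
      rw [star_inv₀]
      congr 1
      rw [scal]
      exact Complex.conj_ofReal _
    rw [hstar, show ((scal a h)⁻¹ * (scal a h)⁻¹ * (scal a h * scal a h)) = 1 from by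
      field_simp, one_smul]
  have hdiag : matOpNorm (Matrix.diagonal (wvec a h)) = 1/(1+a^2) := by
    refine matOpNorm_diagonal_eq' (wvec a h) (1/(1+a^2)) ?_ (Sum.inl 0) ?_
    · intro i
      have key : ∀ x : ℝ, 0 ≤ x → x ≤ 1/(1+a^2) → ‖((x:ℝ):ℂ)‖ ≤ 1/(1+a^2) := by
        intro x hx hxle
        rw [Complex.norm_real, Real.norm_eq_abs, _root_.abs_of_nonneg hx]
        exact hxle
      have hle : h^2/(h^2+a^2*h^2+8) ≤ 1/(1+a^2) := by
        rw [div_le_div_iff₀ hDpos hpos]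
        nlinarith [sq_nonneg h, sq_nonneg a]
      rcases i with i | i <;> fin_cases i <;>
        first
          | exact key _ (by positivity) le_rfl
          | exact key _ (by positivity) hle
    · show ‖wvec a h (Sum.inl 0)‖ = 1/(1+a^2)
      simp only [wvec, Sum.elim_inl, Matrix.cons_val_zero]
      rw [Complex.norm_real, Real.norm_eq_abs, _root_.abs_of_pos (by positivity)]
  rw [key_inv a h hh, ← hB]
  have hsq : matOpNorm B * matOpNorm B = 1/(1+a^2) := by
    rw [← matOpNorm_sq', hBB, hdiag]
  have hnn : 0 ≤ matOpNorm B := norm_nonneg _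
  have hBn : matOpNorm B = Real.sqrt (1/(1+a^2)) := by
    rw [← hsq, Real.sqrt_mul_self hnn]
  rw [hBn, one_div, one_div, Real.sqrt_inv]

end Aux

section Symb
set_option maxHeartbeats 2000000
open Matrix Complex

lemma sminus_eq (h : ℝ) (hh : 0 < h) :
    Sminus h (xih h) = ![(1 - Complex.I)/h, (-1 - Complex.I)/h, 0] := by
  have hh0 : (h:ℂ) ≠ 0 := by exact_mod_cast hh.ne'
  funext j
  fin_cases j
  · show -(1 / (Complex.I * h)) * (Complex.exp (-(Complex.I) * h * ((Real.pi/(2*h) : ℝ):ℂ)) - 1)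
      = (1 - Complex.I)/h
    have hexp : -(Complex.I) * h * ((Real.pi/(2*h) : ℝ):ℂ) = (-(↑Real.pi/2)) * Complex.I := by
      push_cast
      field_simp
    rw [hexp, Complex.exp_mul_I, Complex.cos_neg, Complex.sin_neg, Complex.cos_pi_div_two,
      Complex.sin_pi_div_two]
    field_simp
    ring_nf
    simp [Complex.I_sq]
    ring
  · show -(1 / (Complex.I * h)) * (Complex.exp (-(Complex.I) * h * ((-(Real.pi/(2*h)) : ℝ):ℂ)) - 1)
      = (-1 - Complex.I)/h
    have hexp : -(Complex.I) * h * ((-(Real.pi/(2*h)) : ℝ):ℂ) = ((↑Real.pi/2)) * Complex.I := by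
      push_cast
      field_simp
    rw [hexp, Complex.exp_mul_I, Complex.cos_pi_div_two, Complex.sin_pi_div_two]
    field_simp
    ring_nf
    simp [Complex.I_sq]
    ring
  · show -(1 / (Complex.I * h)) * (Complex.exp (-(Complex.I) * h * ((0 : ℝ):ℂ)) - 1) = 0
    simp

lemma splus_eq (h : ℝ) (hh : 0 < h) :
    Splus h (xih h) = ![(1 + Complex.I)/h, (-1 + Complex.I)/h, 0] := by
  funext j
  fin_cases j <;>
    simp [Splus, sminus_eq h hh, map_div₀, map_sub, map_neg, _root_.map_one, Complex.conj_I,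
      Complex.conj_ofReal] <;> ring

lemma dotSigma_sminus (h : ℝ) (hh : 0 < h) :
    dotSigma (Sminus h (xih h)) = !![0, 0; (2 - 2*Complex.I)/h, 0] := by
  rw [sminus_eq h hh]
  ext i j
  fin_cases i <;> fin_cases j <;>
    · simp [dotSigma, pauli1, pauli2, pauli3]
      try ring_nf
      try simp [Complex.I_sq]
      try ring_nf

lemma dotSigma_splus (h : ℝ) (hh : 0 < h) :
    dotSigma (Splus h (xih h)) = !![0, (2 + 2*Complex.I)/h; 0, 0] := by
  rw [splus_eq h hh]
  ext i j
  fin_cases i <;> fin_cases j <;>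
    · simp [dotSigma, pauli1, pauli2, pauli3]
      try ring_nf
      try simp [Complex.I_sq]
      try ring_nf

lemma fh3_eq (h : ℝ) (hh : 0 < h) : fh3 h (xih h) = 4/h := by
  have e0 : h * (Real.pi/(2*h)) / 2 = Real.pi/4 := by
    field_simp
    ring
  have e1 : h * (-(Real.pi/(2*h))) / 2 = -(Real.pi/4) := by
    field_simp
    ring
  rw [fh3, Fin.sum_univ_three]
  show 4/h * Real.sin (h * (Real.pi/(2*h)) / 2)^2 + 4/h * Real.sin (h * (-(Real.pi/(2*h))) / 2)^2
      + 4/h * Real.sin (h * 0 / 2)^2 = 4/h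
  rw [e0, e1, Real.sin_neg, Real.sin_pi_div_four]
  rw [show h * 0 / 2 = 0 by ring, Real.sin_zero]
  rw [show (-(Real.sqrt 2 / 2))^2 = (Real.sqrt 2)^2/4 by ring,
    show (Real.sqrt 2 / 2)^2 = (Real.sqrt 2)^2/4 by ring,
    Real.sq_sqrt (by norm_num : (0:ℝ) ≤ 2)]
  ring

lemma G3fb_eq (m h : ℝ) (hh : 0 < h) : G3fb h m (xih h) = Mmat m h := by
  rw [G3fb, Mmat, dotSigma_sminus h hh, dotSigma_splus h hh]

lemma G3fbmod_eq (m h : ℝ) (hh : 0 < h) : G3fbmod h m (xih h) = Mmat (m + 4/h) h := by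
  rw [G3fbmod, G3fb_eq m h hh, fh3_eq h hh, Mmat, Mmat, Matrix.fromBlocks_smul,
    Matrix.fromBlocks_add]
  rw [show ((4/h:ℝ):ℂ) = 4/(h:ℂ) from by push_cast; ring,
    show ((m + 4/h:ℝ):ℂ) = (m:ℂ) + 4/(h:ℂ) from by push_cast; ring]
  simp only [smul_zero, add_zero, smul_neg, ← neg_smul]
  rw [← add_smul, ← add_smul,
    show (-(m:ℂ) + -(4/(h:ℂ))) = -((m:ℂ) + 4/(h:ℂ)) from by ring]

end Symb

theorem fb_nonconvergence_3D (m : ℝ) (hm : 0 ≤ m) :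
    (∀ h : ℝ, 0 < h →
      matOpNorm ((G3fbmod h m (xih h)
          - Complex.I • (1 : Matrix (Fin 2 ⊕ Fin 2) (Fin 2 ⊕ Fin 2) ℂ))⁻¹)
        = h / Real.sqrt (h ^ 2 + (m * h + 4) ^ 2) ∧
      matOpNorm ((G3fb h m (xih h)
          - Complex.I • (1 : Matrix (Fin 2 ⊕ Fin 2) (Fin 2 ⊕ Fin 2) ℂ))⁻¹)
        = 1 / Real.sqrt (1 + m ^ 2)) ∧
    (∀ h : ℝ, 0 < h → h ≤ 1 →
      1 / Real.sqrt (1 + m ^ 2) - 1 / Real.sqrt (1 + (m + 4) ^ 2) ≤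
        matOpNorm ((G3fb h m (xih h)
            - Complex.I • (1 : Matrix (Fin 2 ⊕ Fin 2) (Fin 2 ⊕ Fin 2) ℂ))⁻¹
          - (G3fbmod h m (xih h)
            - Complex.I • (1 : Matrix (Fin 2 ⊕ Fin 2) (Fin 2 ⊕ Fin 2) ℂ))⁻¹)) ∧
    0 < 1 / Real.sqrt (1 + m ^ 2) - 1 / Real.sqrt (1 + (m + 4) ^ 2) := by
  have part1 : ∀ h : ℝ, 0 < h →
      matOpNorm ((G3fbmod h m (xih h)
          - Complex.I • (1 : Matrix (Fin 2 ⊕ Fin 2) (Fin 2 ⊕ Fin 2) ℂ))⁻¹)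
        = h / Real.sqrt (h ^ 2 + (m * h + 4) ^ 2) ∧
      matOpNorm ((G3fb h m (xih h)
          - Complex.I • (1 : Matrix (Fin 2 ⊕ Fin 2) (Fin 2 ⊕ Fin 2) ℂ))⁻¹)
        = 1 / Real.sqrt (1 + m ^ 2) := by
    intro h hh
    have hs : (0:ℝ) < Real.sqrt (1 + (m + 4/h)^2) := Real.sqrt_pos.mpr (by positivity)
    constructor
    · rw [G3fbmod_eq m h hh, key_norm (m + 4/h) h (by positivity) hh]
      have hid : h^2 + (m*h+4)^2 = h^2 * (1 + (m + 4/h)^2) := by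
        field_simp <;> ring
      rw [hid, Real.sqrt_mul (by positivity), Real.sqrt_sq hh.le]
      rw [eq_div_iff (by positivity)]
      field_simp
    · rw [G3fb_eq m h hh, key_norm m h hm hh]
  refine ⟨part1, ?_, ?_⟩
  · intro h hh h1
    obtain ⟨e1, e2⟩ := part1 h hh
    have hkey := matOpNorm_sub_ge
      ((G3fb h m (xih h) - Complex.I • (1 : Matrix (Fin 2 ⊕ Fin 2) (Fin 2 ⊕ Fin 2) ℂ))⁻¹)
      ((G3fbmod h m (xih h) - Complex.I • (1 : Matrix (Fin 2 ⊕ Fin 2) (Fin 2 ⊕ Fin 2) ℂ))⁻¹)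
    rw [e1, e2] at hkey
    refine le_trans ?_ hkey
    have hmono : h / Real.sqrt (h ^ 2 + (m * h + 4) ^ 2) ≤ 1 / Real.sqrt (1 + (m + 4) ^ 2) := by
      have hid : h^2 + (m*h+4)^2 = h^2 * (1 + (m + 4/h)^2) := by
        field_simp <;> ring
      rw [hid, Real.sqrt_mul (by positivity), Real.sqrt_sq hh.le]
      have hs : (0:ℝ) < Real.sqrt (1 + (m + 4/h)^2) := Real.sqrt_pos.mpr (by positivity)
      rw [show h / (h * Real.sqrt (1 + (m + 4/h)^2)) = 1 / Real.sqrt (1 + (m + 4/h)^2) from by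
        rw [eq_div_iff hs.ne']
        field_simp]
      apply one_div_le_one_div_of_le (Real.sqrt_pos.mpr (by positivity))
      apply Real.sqrt_le_sqrt
      have h4 : (4:ℝ) ≤ 4/h := by
        rw [le_div_iff₀ hh]
        nlinarith
      nlinarith
    linarith
  · have hlt : Real.sqrt (1 + m^2) < Real.sqrt (1 + (m+4)^2) :=
      Real.sqrt_lt_sqrt (by positivity) (by nlinarith)
    have h1 : (0:ℝ) < Real.sqrt (1 + m^2) := Real.sqrt_pos.mpr (by positivity)
    have := one_div_lt_one_div_of_lt h1 hlt
    linarith
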